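/- arXiv:2512.21519 — 5 statements merged into one kernel-verified Lean document; each statement's English description precedes it below -/
import Mathlib

section
/- Let T be a commutative ternary Γ-semiring, S ⊆ T a multiplicative system, and γ ∈ Γ fixed. Define the relation ≈ on T × S by (a, s) ≈ (b, t) iff there exists u ∈ S with m γ u a t = m γ u b s. Then ≈ is an equivalence relation on T × S. (Well-definedness of the localization S⁻¹T in the paper's Definition 3.3.) -/
/-- A multiplicative system: a nonempty subset closed under all ternary products. -/
def IsMultSystem {T Γ : Type*} (m : Γ → T → T → T → T) (S : Set T) : Prop :=
  S.Nonempty ∧ ∀ (γ : Γ) (a b c : T), a ∈ S → b ∈ S → c ∈ S → m γ a b c ∈ S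

theorem stmt3 {T Γ : Type*} [AddCommMonoid T] (m : Γ → T → T → T → T)
    (hsym₁ : ∀ (γ : Γ) (a b c : T), m γ a b c = m γ b a c)
    (hsym₂ : ∀ (γ : Γ) (a b c : T), m γ a b c = m γ a c b)
    (hdist : ∀ (γ : Γ) (a b c d : T), m γ (a + b) c d = m γ a c d + m γ b c d)
    (hassoc₁ : ∀ (γ δ : Γ) (a b c d e : T), m δ (m γ a b c) d e = m δ a (m γ b c d) e)
    (hassoc₂ : ∀ (γ δ : Γ) (a b c d e : T), m δ (m γ a b c) d e = m δ a b (m γ c d e))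
    (habs : ∀ (γ : Γ) (a b : T), m γ 0 a b = 0)
    (S : Set T) (hS : IsMultSystem m S) (γ : Γ) :
    Equivalence (fun x y : T × S =>
      ∃ u ∈ S, m γ u x.1 (y.2 : T) = m γ u y.1 (x.2 : T)) := by
  constructor
  · intro x
    obtain ⟨u, hu⟩ := hS.1
    exact ⟨u, hu, rfl⟩
  · rintro x y ⟨u, hu, h⟩
    exact ⟨u, hu, h.symm⟩
  · rintro ⟨a, s, hs⟩ ⟨b, t, ht⟩ ⟨c, r, hr⟩ ⟨u, hu, h1⟩ ⟨v, hv, h2⟩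
    simp only at h1 h2 ⊢
    refine ⟨m γ u v t, hS.2 γ u v t hu hv ht, ?_⟩
    calc m γ (m γ u v t) a r
        = m γ (m γ v u t) a r := by rw [hsym₁ γ u v t]
      _ = m γ v (m γ u t a) r := hassoc₁ ..
      _ = m γ v (m γ u a t) r := by rw [hsym₂ γ u t a]
      _ = m γ v (m γ u b s) r := by rw [h1]
      _ = m γ (m γ u b s) v r := hsym₁ ..
      _ = m γ u b (m γ s v r) := hassoc₂ ..
      _ = m γ u b (m γ v r s) := by rw [hsym₁ γ s v r, hsym₂ γ v s r]
      _ = m γ (m γ u b v) r s := (hassoc₂ ..).symm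
      _ = m γ (m γ u v b) r s := by rw [hsym₂ γ u b v]
      _ = m γ u (m γ v b r) s := hassoc₁ ..
      _ = m γ u (m γ v c t) s := by rw [h2]
      _ = m γ u (m γ v t c) s := by rw [hsym₂ γ v c t]
      _ = m γ (m γ u v t) c s := (hassoc₁ ..).symm
end

section
/- Let T be a commutative ternary Γ-semiring, S ⊆ T a multiplicative system, and γ ∈ Γ fixed, with the fraction relation ≈ on T × S given by (a, s) ≈ (b, t) iff there exists u ∈ S with m γ u a t = m γ u b s. If (a, s) ≈ (a', s'), (b, t) ≈ (b', t'), and (c, u) ≈ (c', u'), then m γ s t u ∈ S, m γ s' t' u' ∈ S, and (m γ a b c, m γ s t u) ≈ (m γ a' b' c', m γ s' t' u'). (Well-definedness of the ternary multiplication {a/s, b/t, c/u}_γ = {a,b,c}_γ / {s,t,u}_γ on S⁻¹T in the paper's Definition 3.3.) -/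
def Frel {T Γ : Type*} (m : Γ → T → T → T → T) (γ : Γ) (S : Set T)
    (a s b t : T) : Prop :=
  ∃ u ∈ S, m γ u a t = m γ u b s

theorem stmt4 {T Γ : Type*} [AddCommMonoid T] (m : Γ → T → T → T → T)
    (hsym₁ : ∀ (γ : Γ) (a b c : T), m γ a b c = m γ b a c)
    (hsym₂ : ∀ (γ : Γ) (a b c : T), m γ a b c = m γ a c b)
    (hdist : ∀ (γ : Γ) (a b c d : T), m γ (a + b) c d = m γ a c d + m γ b c d)
    (hassoc₁ : ∀ (γ δ : Γ) (a b c d e : T), m δ (m γ a b c) d e = m δ a (m γ b c d) e)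
    (hassoc₂ : ∀ (γ δ : Γ) (a b c d e : T), m δ (m γ a b c) d e = m δ a b (m γ c d e))
    (habs : ∀ (γ : Γ) (a b : T), m γ 0 a b = 0)
    (S : Set T) (hS : IsMultSystem m S) (γ : Γ)
    (a b c a' b' c' s t u s' t' u' : T)
    (hs : s ∈ S) (ht : t ∈ S) (hu : u ∈ S)
    (hs' : s' ∈ S) (ht' : t' ∈ S) (hu' : u' ∈ S)
    (h₁ : Frel m γ S a s a' s') (h₂ : Frel m γ S b t b' t') (h₃ : Frel m γ S c u c' u') :
    m γ s t u ∈ S ∧ m γ s' t' u' ∈ S ∧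
      Frel m γ S (m γ a b c) (m γ s t u) (m γ a' b' c') (m γ s' t' u') := by
  -- full symmetry helpers
  have comm13 : ∀ (x y z : T), m γ x y z = m γ z y x := by
    intro x y z; rw [hsym₁, hsym₂, hsym₁]
  -- transpose lemma for 3×3 grids
  have key : ∀ x1 x2 x3 x4 x5 x6 x7 x8 x9 : T,
      m γ (m γ x1 x2 x3) (m γ x4 x5 x6) (m γ x7 x8 x9)
        = m γ (m γ x1 x4 x7) (m γ x2 x5 x8) (m γ x3 x6 x9) := by
    intro x1 x2 x3 x4 x5 x6 x7 x8 x9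
    have norm : ∀ y1 y2 y3 y4 y5 y6 y7 y8 y9 : T,
        m γ (m γ y1 y2 y3) (m γ y4 y5 y6) (m γ y7 y8 y9)
          = m γ y1 y2 (m γ y4 y5 (m γ y7 y8 (m γ y3 y6 y9))) := by
      intro y1 y2 y3 y4 y5 y6 y7 y8 y9
      rw [hassoc₂]
      congr 1
      rw [hsym₁ γ y3, hassoc₂]
      congr 1
      rw [comm13 y6 y3, hassoc₂]
      congr 1
      rw [hsym₁ γ y9, hsym₂ γ y3]
    rw [norm x1 x2 x3 x4 x5 x6 x7 x8 x9, norm x1 x4 x7 x2 x5 x8 x3 x6 x9]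
    have swap34 : ∀ A B C D E : T, m γ (m γ A B C) D E = m γ (m γ A B D) C E := by
      intro A B C D E
      rw [hassoc₁, hassoc₁, hsym₂ γ B]
    have swapCE : ∀ A B C D E : T, m γ (m γ A B C) D E = m γ (m γ A B E) D C := by
      intro A B C D E
      rw [swap34, hsym₂ γ (m γ A B D), swap34]
    set K := m γ x7 x8 (m γ x3 x6 x9) with hK
    calc m γ x1 x2 (m γ x4 x5 K)
        = m γ x1 (m γ x4 x5 K) x2 := by rw [hsym₂]
      _ = m γ (m γ x1 x4 x5) K x2 := (hassoc₁ γ γ x1 x4 x5 K x2).symm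
      _ = m γ (m γ x1 x5 x4) K x2 := by rw [hsym₂ γ x1 x4 x5]
      _ = m γ (m γ x1 x5 x2) K x4 := swapCE _ _ _ _ _
      _ = m γ (m γ x1 x2 x5) K x4 := by rw [hsym₂ γ x1 x5 x2]
      _ = m γ x1 (m γ x2 x5 K) x4 := hassoc₁ γ γ x1 x2 x5 K x4
      _ = m γ x1 x4 (m γ x2 x5 K) := by rw [hsym₂]
      _ = m γ x1 x4 (m γ x2 x5 (m γ x3 x6 (m γ x7 x8 x9))) := by
            have hKK : K = m γ x3 x6 (m γ x7 x8 x9) :=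
              calc K = m γ (m γ x3 x6 x9) x8 x7 := comm13 _ _ _
                _ = m γ (m γ x3 x6 x9) x7 x8 := hsym₂ γ _ _ _
                _ = m γ x3 x6 (m γ x9 x7 x8) := hassoc₂ γ γ _ _ _ _ _
                _ = m γ x3 x6 (m γ x7 x8 x9) := by rw [comm13 x9, hsym₁ γ x8]
            rw [hKK]
  obtain ⟨v₁, hv₁, e₁⟩ := h₁
  obtain ⟨v₂, hv₂, e₂⟩ := h₂
  obtain ⟨v₃, hv₃, e₃⟩ := h₃
  refine ⟨hS.2 γ s t u hs ht hu, hS.2 γ s' t' u' hs' ht' hu', m γ v₁ v₂ v₃,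
    hS.2 γ v₁ v₂ v₃ hv₁ hv₂ hv₃, ?_⟩
  calc m γ (m γ v₁ v₂ v₃) (m γ a b c) (m γ s' t' u')
      = m γ (m γ v₁ a s') (m γ v₂ b t') (m γ v₃ c u') := key _ _ _ _ _ _ _ _ _
    _ = m γ (m γ v₁ a' s) (m γ v₂ b' t) (m γ v₃ c' u) := by rw [e₁, e₂, e₃]
    _ = m γ (m γ v₁ v₂ v₃) (m γ a' b' c') (m γ s t u) := (key _ _ _ _ _ _ _ _ _).symm
end

section
/- Let T be a commutative ternary Γ-semiring with an identity-like element e (meaning m γ e e a = a for all γ ∈ Γ, a ∈ T), let S ⊆ T be a multiplicative system with e ∈ S, and let γ ∈ Γ be fixed, with the fraction relation ≈ on T × S given by (a, s) ≈ (b, t) iff there exists u ∈ S with m γ u a t = m γ u b s. If (a, s) ≈ (a', s') and (b, t) ≈ (b', t'), then m γ s t e ∈ S, m γ s' t' e ∈ S, and (m γ a t e + m γ b s e, m γ s t e) ≈ (m γ a' t' e + m γ b' s' e, m γ s' t' e). (Well-definedness of addition on the localization S⁻¹T asserted in the paper's Definition 3.3.) -/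
theorem stmt5 {T Γ : Type*} [AddCommMonoid T] (m : Γ → T → T → T → T)
    (hsym₁ : ∀ (γ : Γ) (a b c : T), m γ a b c = m γ b a c)
    (hsym₂ : ∀ (γ : Γ) (a b c : T), m γ a b c = m γ a c b)
    (hdist : ∀ (γ : Γ) (a b c d : T), m γ (a + b) c d = m γ a c d + m γ b c d)
    (hassoc₁ : ∀ (γ δ : Γ) (v w x y z : T), m δ (m γ v w x) y z = m δ v (m γ w x y) z)
    (hassoc₂ : ∀ (γ δ : Γ) (v w x y z : T), m δ (m γ v w x) y z = m δ v w (m γ x y z))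
    (habs : ∀ (γ : Γ) (a b : T), m γ 0 a b = 0)
    (e : T) (he : ∀ (γ : Γ) (a : T), m γ e e a = a)
    (S : Set T) (hS : IsMultSystem m S) (heS : e ∈ S) (γ : Γ)
    (a b a' b' s t s' t' : T)
    (hs : s ∈ S) (ht : t ∈ S) (hs' : s' ∈ S) (ht' : t' ∈ S)
    (h₁ : Frel m γ S a s a' s') (h₂ : Frel m γ S b t b' t') :
    m γ s t e ∈ S ∧ m γ s' t' e ∈ S ∧
      Frel m γ S (m γ a t e + m γ b s e) (m γ s t e)
        (m γ a' t' e + m γ b' s' e) (m γ s' t' e) := by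
  obtain ⟨u, huS, hu⟩ := h₁
  obtain ⟨v, hvS, hv⟩ := h₂
  letI : Mul T := ⟨fun x y => m γ x y e⟩
  letI : One T := ⟨e⟩
  have hmul : ∀ x y : T, x * y = m γ x y e := fun _ _ => rfl
  have hm3 : ∀ x y z : T, x * y * z = m γ x y z := by
    intro x y z
    rw [hmul, hmul, hassoc₂, hsym₂ γ e z e, he]
  letI : CommSemiring T :=
    { (inferInstance : AddCommMonoid T) with
      mul := (· * ·)
      one := e
      mul_assoc := by
        intro x y z
        rw [hm3, hmul, hmul, hsym₁ γ x (m γ y z e) e, hassoc₂, hsym₂ γ e x e, he,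
          hsym₂ γ y z x, hsym₁ γ y x z]
      mul_comm := by intro x y; rw [hmul, hmul, hsym₁]
      one_mul := by intro x; show m γ e x e = x; rw [hsym₂, he]
      mul_one := by intro x; show m γ x e e = x; rw [hsym₁, hsym₂, he]
      left_distrib := by
        intro x y z
        show m γ x (y + z) e = m γ x y e + m γ x z e
        rw [hsym₁ γ x (y + z) e, hdist, hsym₁ γ y x e, hsym₁ γ z x e]
      right_distrib := by intro x y z; exact hdist γ x y z e
      zero_mul := by intro x; exact habs γ x e
      mul_zero := by intro x; show m γ x 0 e = 0; rw [hsym₁]; exact habs γ x e }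
  have hSclosed : ∀ x y : T, x ∈ S → y ∈ S → x * y ∈ S := fun x y hx hy =>
    hS.2 γ x y e hx hy heS
  refine ⟨hS.2 γ s t e hs ht heS, hS.2 γ s' t' e hs' ht' heS,
    ⟨u * v, hSclosed u v huS hvS, ?_⟩⟩
  simp only [← hm3, ← hmul, show e = (1:T) from rfl, mul_one] at hu hv ⊢
  have key : u * v * (a * t + b * s) * (s' * t') =
      (u * a * s') * (v * (t * t')) + (v * b * t') * (u * (s * s')) := by ring
  rw [key, hu, hv]
  ring
end

section
/- Let T be a commutative ternary Γ-semiring, p a prime ideal of T, S = T ∖ p, and γ ∈ Γ fixed, with the fraction relation ≈ on T × S given by (a, s) ≈ (b, t) iff there exists u ∈ S with m γ u a t = m γ u b s. If (a, s) ≈ (b, t) and a ∈ p, then b ∈ p. (Well-definedness of the maximal ideal p_p = {a/s : a ∈ p, s ∉ p} of the localization T_p in the paper's Remark 3.5 and Proposition 3.9(i).) -/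
/-- An ideal of a ternary Γ-semiring. -/
def IsIdeal {T Γ : Type*} [AddCommMonoid T] (m : Γ → T → T → T → T) (I : Set T) : Prop :=
  (0 : T) ∈ I ∧ (∀ a b : T, a ∈ I → b ∈ I → a + b ∈ I) ∧
    ∀ (γ : Γ) (x y a : T), a ∈ I → m γ x y a ∈ I

/-- A prime ideal of a ternary Γ-semiring. -/
def IsPrimeIdeal {T Γ : Type*} [AddCommMonoid T] (m : Γ → T → T → T → T) (p : Set T) : Prop :=
  IsIdeal m p ∧ p ≠ Set.univ ∧
    ∀ (γ : Γ) (a b c : T), m γ a b c ∈ p → a ∈ p ∨ b ∈ p ∨ c ∈ p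

theorem stmt7 {T Γ : Type*} [AddCommMonoid T] (m : Γ → T → T → T → T)
    (hsym₁ : ∀ (γ : Γ) (a b c : T), m γ a b c = m γ b a c)
    (hsym₂ : ∀ (γ : Γ) (a b c : T), m γ a b c = m γ a c b)
    (hdist : ∀ (γ : Γ) (a b c d : T), m γ (a + b) c d = m γ a c d + m γ b c d)
    (hassoc₁ : ∀ (γ δ : Γ) (a b c d e : T), m δ (m γ a b c) d e = m δ a (m γ b c d) e)
    (hassoc₂ : ∀ (γ δ : Γ) (a b c d e : T), m δ (m γ a b c) d e = m δ a b (m γ c d e))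
    (habs : ∀ (γ : Γ) (a b : T), m γ 0 a b = 0)
    (p : Set T) (hp : IsPrimeIdeal m p) (γ : Γ)
    (a s b t : T) (hs : s ∈ Set.univ \ p) (ht : t ∈ Set.univ \ p)
    (h : Frel m γ (Set.univ \ p) a s b t) (ha : a ∈ p) :
    b ∈ p := by
  obtain ⟨u, hu, heq⟩ := h
  have hmem : m γ u a t ∈ p := by
    have := hp.1.2.2 γ u t a ha
    rwa [hsym₂] at this
  rw [heq] at hmem
  rcases hp.2.2 γ u b s hmem with h1 | h1 | h1
  · exact absurd h1 hu.2
  · exact h1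
  · exact absurd h1 hs.2
end

section
/- Let T and U be commutative ternary Γ-semirings over the same index type Γ, with ternary products m and m' respectively, and let f : T → U be a morphism of ternary Γ-semirings. Let S ⊆ T be a multiplicative system and γ ∈ Γ fixed, and suppose that for each s ∈ S there is an element v s ∈ U with m' γ (f s) (v s) x = x for all x ∈ U (i.e., f maps S to units). If (a, s) ≈ (b, t), where ≈ is the fraction relation on T × S given by (a, s) ≈ (b, t) iff there exists u ∈ S with m γ u a t = m γ u b s, then m' γ (f a) (v s) x = m' γ (f b) (v t) x for all x ∈ U. (The well-definedness core of the universal property of localization, the paper's Theorem 3.4.) -/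
theorem stmt8 {T U Γ : Type*} [AddCommMonoid T] [AddCommMonoid U]
    (m : Γ → T → T → T → T) (m' : Γ → U → U → U → U)
    -- axioms for T
    (hsym₁ : ∀ (γ : Γ) (a b c : T), m γ a b c = m γ b a c)
    (hsym₂ : ∀ (γ : Γ) (a b c : T), m γ a b c = m γ a c b)
    (hdist : ∀ (γ : Γ) (a b c d : T), m γ (a + b) c d = m γ a c d + m γ b c d)
    (hassoc₁ : ∀ (γ δ : Γ) (a b c d e : T), m δ (m γ a b c) d e = m δ a (m γ b c d) e)
    (hassoc₂ : ∀ (γ δ : Γ) (a b c d e : T), m δ (m γ a b c) d e = m δ a b (m γ c d e))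
    (habs : ∀ (γ : Γ) (a b : T), m γ 0 a b = 0)
    -- axioms for U
    (hsym₁' : ∀ (γ : Γ) (a b c : U), m' γ a b c = m' γ b a c)
    (hsym₂' : ∀ (γ : Γ) (a b c : U), m' γ a b c = m' γ a c b)
    (hdist' : ∀ (γ : Γ) (a b c d : U), m' γ (a + b) c d = m' γ a c d + m' γ b c d)
    (hassoc₁' : ∀ (γ δ : Γ) (a b c d e : U), m' δ (m' γ a b c) d e = m' δ a (m' γ b c d) e)
    (hassoc₂' : ∀ (γ δ : Γ) (a b c d e : U), m' δ (m' γ a b c) d e = m' δ a b (m' γ c d e))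
    (habs' : ∀ (γ : Γ) (a b : U), m' γ 0 a b = 0)
    -- f is a morphism of ternary Γ-semirings
    (f : T → U) (hf0 : f 0 = 0) (hfadd : ∀ a b : T, f (a + b) = f a + f b)
    (hfm : ∀ (γ : Γ) (a b c : T), f (m γ a b c) = m' γ (f a) (f b) (f c))
    (S : Set T) (hS : IsMultSystem m S) (γ : Γ)
    -- f maps S to units, with witnesses v
    (v : T → U) (hv : ∀ s ∈ S, ∀ x : U, m' γ (f s) (v s) x = x)
    (a s b t : T) (hs : s ∈ S) (ht : t ∈ S)
    (h : Frel m γ S a s b t) :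
    ∀ x : U, m' γ (f a) (v s) x = m' γ (f b) (v t) x := by
  obtain ⟨u, hu, hkey⟩ := h
  have hfkey : m' γ (f u) (f a) (f t) = m' γ (f u) (f b) (f s) := by
    rw [← hfm, ← hfm, hkey]
  have main : ∀ (c w r : T), w ∈ S → r ∈ S →
      ∀ x : U, m' γ (m' γ (m' γ (f u) (f c) (f r)) (v w) (v r)) (v u) x
        = m' γ (f c) (v w) x := by
    intro c w r hw hr x
    rw [hassoc₂', hassoc₂']
    have inner : m' γ (f r) (v w) (m' γ (v r) (v u) x) = m' γ (v u) (v w) x := by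
      rw [hsym₂' γ (f r), ← hassoc₁', hv r hr, hsym₂']
    rw [inner, ← hassoc₂', hsym₂' γ (f u) (f c) (v u), hv u hu]
  intro x
  have h1 := main a s t hs ht x
  have h2 := main b t s ht hs x
  rw [← h1, ← h2, hfkey, hsym₂' γ (m' γ (f u) (f b) (f s)) (v t) (v s)]
end
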